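/- arXiv:2511.22836 — 3 statements merged into one kernel-verified Lean document; each statement's English description precedes it below -/
import Mathlib

section
/- Let X be an n×n positive semidefinite complex matrix. Then for all indices i, j, the diagonal entries X i i and X j j are real and satisfy Real.sqrt((2·Re(X i j))² + (2·Im(X i j))² + (Re(X i i) − Re(X j j))²) ≤ Re(X i i) + Re(X j j). -/
open ComplexOrder

theorem Matrix.PosSemidef.norm_apply_sq_le {𝕜 ι : Type*} [RCLike 𝕜] [Fintype ι]
    {A : Matrix ι ι 𝕜} (hA : A.PosSemidef) (i j : ι) :
    ‖A i j‖ ^ 2 ≤ RCLike.re (A i i) * RCLike.re (A j j) := by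
  have hdet := (hA.submatrix ![i, j]).det_nonneg
  rw [Matrix.det_fin_two] at hdet
  simp only [Matrix.submatrix_apply, Matrix.cons_val_zero, Matrix.cons_val_one] at hdet
  rw [← hA.isHermitian.apply j i, ← hA.isHermitian.coe_re_apply_self i,
    ← hA.isHermitian.coe_re_apply_self j, RCLike.star_def, RCLike.mul_conj] at hdet
  norm_cast at hdet
  exact sub_nonneg.mp (RCLike.ofReal_nonneg.mp hdet)

-- `(2a)² + (2b)² + (p - q)² = (p + q)² - 4 (p q - a² - b²)`
theorem sqrt_sq_add_sq_add_sq_sub_le_add {a b p q : ℝ} (hp : 0 ≤ p) (hq : 0 ≤ q)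
    (h : a ^ 2 + b ^ 2 ≤ p * q) :
    √((2 * a) ^ 2 + (2 * b) ^ 2 + (p - q) ^ 2) ≤ p + q :=
  Real.sqrt_le_iff.mpr ⟨by positivity, by nlinarith⟩

/-- Every positive semidefinite complex matrix has real diagonal entries and its
`2 × 2` principal submatrices satisfy the second-order cone inequality used in the
SOCP reformulation (P3). -/
theorem psd_entries_satisfy_socp {n : ℕ}
    (X : Matrix (Fin n) (Fin n) ℂ) (hX : X.PosSemidef) (i j : Fin n) :
    (X i i).im = 0 ∧ (X j j).im = 0 ∧
      Real.sqrt ((2 * (X i j).re) ^ 2 + (2 * (X i j).im) ^ 2 +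
          ((X i i).re - (X j j).re) ^ 2) ≤ (X i i).re + (X j j).re := by
  obtain ⟨hii_re, hii_im⟩ := Complex.nonneg_iff.mp (hX.diag_nonneg (i := i))
  obtain ⟨hjj_re, hjj_im⟩ := Complex.nonneg_iff.mp (hX.diag_nonneg (i := j))
  have hij := hX.norm_apply_sq_le i j
  rw [Complex.sq_norm, Complex.normSq_apply] at hij
  refine ⟨hii_im.symm, hjj_im.symm, sqrt_sq_add_sq_add_sq_sub_le_add hii_re hjj_re ?_⟩
  simpa only [sq, RCLike.re_to_complex] using hij
end

section
/- Let K be a convex cone in ℝ^d (viewed as a Euclidean inner product space), K* = {y ∈ ℝ^d : ⟪s, y⟫ ≥ 0 for all s ∈ K} its inner dual cone, A a d×p real matrix, b ∈ ℝ^d, c ∈ ℝ^p. Suppose x ∈ ℝ^p, y ∈ ℝ^d, s ∈ ℝ^d, τ ∈ ℝ, κ ∈ ℝ satisfy the homogeneous self-dual system: A x + s − τ • b = 0, Aᵀ y + τ • c = 0, −⟪b, y⟫ − ⟪c, x⟫ − κ = 0, ⟪s, y⟫ + τ·κ = 0, s ∈ K, y ∈ K*, τ > 0, κ ≥ 0.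 Then the scaled point (x/τ, y/τ, s/τ) satisfies the KKT conditions: A (τ⁻¹ • x) + τ⁻¹ • s = b, Aᵀ (τ⁻¹ • y) + c = 0, τ⁻¹ • s ∈ K, τ⁻¹ • y ∈ K*, and ⟪τ⁻¹ • s, τ⁻¹ • y⟫ = 0. -/
open Matrix

/-- A nontrivial solution of the homogeneous self-dual system with `τ > 0`,
after dividing by `τ`, satisfies exactly the KKT conditions of the original
conic primal-dual pair. Here `K*` is the inner dual cone of `K` for the
Euclidean inner product (the dot product) on `ℝ^d`. -/
theorem hsds_solution_yields_kkt {d p : ℕ}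
    (K : ConvexCone ℝ (Fin d → ℝ))
    (A : Matrix (Fin d) (Fin p) ℝ) (b : Fin d → ℝ) (c : Fin p → ℝ)
    (x : Fin p → ℝ) (y s : Fin d → ℝ) (τ κ : ℝ)
    (h1 : A.mulVec x + s - τ • b = 0)
    (h2 : A.transpose.mulVec y + τ • c = 0)
    (h3 : -(b ⬝ᵥ y) - c ⬝ᵥ x - κ = 0)
    (h4 : s ⬝ᵥ y + τ * κ = 0)
    (hs : s ∈ K)
    (hy : ∀ s' ∈ K, 0 ≤ s' ⬝ᵥ y)
    (hτ : 0 < τ) (hκ : 0 ≤ κ) :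
    A.mulVec (τ⁻¹ • x) + τ⁻¹ • s = b ∧
      A.transpose.mulVec (τ⁻¹ • y) + c = 0 ∧
      τ⁻¹ • s ∈ K ∧
      (∀ s' ∈ K, 0 ≤ s' ⬝ᵥ (τ⁻¹ • y)) ∧
      (τ⁻¹ • s) ⬝ᵥ (τ⁻¹ • y) = 0 := by
  have hτne : τ ≠ 0 := ne_of_gt hτ
  have hτinv : (0:ℝ) < τ⁻¹ := inv_pos.mpr hτ
  have hsy0 : s ⬝ᵥ y = 0 := by
    have h5 : 0 ≤ s ⬝ᵥ y := hy s hs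
    have h6 : 0 ≤ τ * κ := mul_nonneg hτ.le hκ
    nlinarith
  refine ⟨?_, ?_, ?_, ?_, ?_⟩
  · have := congrArg (fun v => τ⁻¹ • v) h1
    simp only [smul_sub, smul_add, smul_zero, smul_smul, inv_mul_cancel₀ hτne,
      one_smul] at this
    rw [Matrix.mulVec_smul]
    exact sub_eq_zero.mp this
  · have := congrArg (fun v => τ⁻¹ • v) h2
    simp only [smul_add, smul_zero, smul_smul, inv_mul_cancel₀ hτne, one_smul,
      ] at this
    rw [Matrix.mulVec_smul]
    exact this
  · exact K.smul_mem hτinv hs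
  · intro s' hs'
    have := hy s' hs'
    rw [dotProduct_smul]
    positivity
  · rw [smul_dotProduct, dotProduct_smul, hsy0]
    simp
end

section
/- Fix w > 0 and ε ∈ ℝ, and for each δ > 0 define the weighted Huber loss H_δ(ε) = w·ε²/2 if |ε| ≤ δ, and H_δ(ε) = w·δ·(|ε| − δ/2) otherwise. Then the function δ ↦ H_δ(ε)/δ tends to w·|ε| as δ tends to 0 from the right (i.e., Filter.Tendsto (fun δ => H_δ(ε)/δ) (nhdsWithin 0 (Set.Ioi 0)) (nhds (w·|ε|))). -/
/-- As `δ → 0⁺`, the rescaled weighted Huber loss `H_δ(ε)/δ` tends to the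
weighted absolute value `w·|ε|`. -/
theorem huber_tendsto_wlav (w : ℝ) (hw : 0 < w) (ε : ℝ) :
    Filter.Tendsto
      (fun δ : ℝ =>
        (if |ε| ≤ δ then w * ε ^ 2 / 2 else w * δ * (|ε| - δ / 2)) / δ)
      (nhdsWithin 0 (Set.Ioi 0)) (nhds (w * |ε|)) := by
  rcases eq_or_ne ε 0 with hε | hε
  · subst hε
    simp only [abs_zero, mul_zero]
    apply Filter.Tendsto.congr' _ tendsto_const_nhds
    filter_upwards [self_mem_nhdsWithin] with δ hδ
    rw [if_pos (le_of_lt hδ)]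
    simp
  · have habs : 0 < |ε| := abs_pos.mpr hε
    have hmem : Set.Ioo (0:ℝ) |ε| ∈ nhdsWithin 0 (Set.Ioi 0) := by
      rw [mem_nhdsWithin]
      exact ⟨Set.Iio |ε|, isOpen_Iio, by simpa using habs,
        fun x hx => ⟨hx.2, hx.1⟩⟩
    have hlim : Filter.Tendsto (fun δ : ℝ => w * (|ε| - δ / 2))
        (nhdsWithin 0 (Set.Ioi 0)) (nhds (w * |ε|)) := by
      have : Filter.Tendsto (fun δ : ℝ => w * (|ε| - δ / 2))
          (nhds 0) (nhds (w * (|ε| - 0 / 2))) := by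
        apply Filter.Tendsto.const_mul
        exact (Filter.tendsto_id.div_const 2).const_sub |ε|
      simpa using this.mono_left nhdsWithin_le_nhds
    apply Filter.Tendsto.congr' _ hlim
    filter_upwards [hmem] with δ hδ
    rw [if_neg (not_le.mpr hδ.2)]
    have hδ0 : δ ≠ 0 := ne_of_gt hδ.1
    field_simp
end
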